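/- arXiv:1502.03874 — 10 statements merged into one kernel-verified Lean document; each statement's English description precedes it below -/
import Mathlib

section
/- Let n > 1 and let S be a subset of F_{2^n} such that (a) 0 ∈ S if and only if 1 ∈ S, and (b) for every x ∈ S with x ≠ 0 and x ≠ 1, the element x/(1+x) also belongs to S. Define f : F_{2^n} → F_{2^n} by f(x) = x^{-1} + δ_S(x), where x^{-1} denotes the inverse function with the convention 0^{-1} = 0 and δ_S is the characteristic function of S (valued in {0,1} ⊆ F_{2^n}). Then f is a bijection of F_{2^n}. -/
open scoped Classical

theorem stmt0 {F : Type*} [Field F] [Fintype F] {n : ℕ} (hn : 1 < n)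
    (hcard : Fintype.card F = 2 ^ n) (S : Set F)
    (h01 : (0 : F) ∈ S ↔ (1 : F) ∈ S)
    (hclosed : ∀ x ∈ S, x ≠ 0 → x ≠ 1 → x / (1 + x) ∈ S) :
    Function.Bijective (fun x : F => x⁻¹ + (if x ∈ S then (1 : F) else 0)) := by
  have h2 : (1 : F) + 1 = 0 := by
    have hc := FiniteField.cast_card_eq_zero F
    rw [hcard] at hc
    push_cast at hc
    have h2' : (2 : F) = 0 := pow_eq_zero_iff (by omega : n ≠ 0) |>.mp hc
    linear_combination h2'
  have key : ∀ a b : F, a ∈ S → b ∉ S → a⁻¹ + 1 = b⁻¹ → False := by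
    intro a b haS hbS hab
    by_cases ha0 : a = 0
    · subst ha0
      have hb1 : b = 1 := by
        have : b⁻¹ = 1 := by rw [← hab]; simp
        exact inv_eq_one.mp this
      exact hbS (hb1 ▸ h01.mp haS)
    by_cases ha1 : a = 1
    · subst ha1
      have hb0 : b = 0 := by
        have : b⁻¹ = 0 := by rw [← hab]; simp [h2]
        exact inv_eq_zero.mp this
      exact hbS (hb0 ▸ h01.mpr haS)
    have hden : (1 : F) + a ≠ 0 := by
      intro h
      apply ha1
      linear_combination h - h2
    have hbinv : b⁻¹ = (1 + a) / a := by
      rw [← hab]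
      field_simp
    have hbne : b⁻¹ ≠ 0 := by
      rw [hbinv]
      exact div_ne_zero hden ha0
    have hb0 : b ≠ 0 := by
      intro h; apply hbne; rw [h]; simp
    have hbval : b = a / (1 + a) := by
      have := congrArg (·⁻¹) hbinv
      simpa [inv_inv, inv_div] using this
    exact hbS (hbval ▸ hclosed a haS ha0 ha1)
  rw [Fintype.bijective_iff_injective_and_card]
  refine ⟨?_, rfl⟩
  intro x y hxy
  simp only at hxy
  by_contra hne
  by_cases hx : x ∈ S <;> by_cases hy : y ∈ S
  · simp only [if_pos hx, if_pos hy, add_left_inj] at hxy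
    exact hne (inv_injective hxy)
  · exact key x y hx hy (by rw [if_pos hx, if_neg hy] at hxy; linear_combination hxy)
  · exact key y x hy hx (by rw [if_neg hx, if_pos hy] at hxy; linear_combination -hxy)
  · simp only [if_neg hx, if_neg hy, add_left_inj] at hxy
    exact hne (inv_injective hxy)
end

section
/- Let n > 1, let S ⊆ F_{2^n} satisfy the closure conditions: 0 ∈ S iff 1 ∈ S, and x ∈ S \ {0,1} implies x/(1+x) ∈ S. Define f(x) = x^{-1} + δ_S(x) and let S' = { y ∈ F_{2^n} : ∃ x ∈ S, x ≠ 0 and y = x^{-1} + 1 } ∪ (if 0 ∈ S then {1} else ∅). Then the compositional inverse of f is g(x) = (x + δ_{S'}(x))^{-1}, i.e., g(f(x)) = x and f(g(x)) = x for all x ∈ F_{2^n}. -/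
open scoped Classical

theorem stmt1 {F : Type*} [Field F] [Fintype F] {n : ℕ} (hn : 1 < n)
    (hcard : Fintype.card F = 2 ^ n) (S : Set F)
    (h01 : (0 : F) ∈ S ↔ (1 : F) ∈ S)
    (hclosed : ∀ x ∈ S, x ≠ 0 → x ≠ 1 → x / (1 + x) ∈ S)
    (f g : F → F)
    (hf : ∀ x, f x = x⁻¹ + (if x ∈ S then (1 : F) else 0))
    (S' : Set F)
    (hS' : S' = {y : F | ∃ x ∈ S, x ≠ 0 ∧ y = x⁻¹ + 1} ∪
        (if (0 : F) ∈ S then {1} else ∅))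
    (hg : ∀ x, g x = (x + (if x ∈ S' then (1 : F) else 0))⁻¹) :
    ∀ x : F, g (f x) = x ∧ f (g x) = x := by
  -- characteristic 2
  have h2 : (2 : F) = 0 := by
    have h := FiniteField.cast_card_eq_zero F
    rw [hcard, Nat.cast_pow] at h
    have hn0 : n ≠ 0 := by omega
    exact (pow_eq_zero_iff hn0).mp (by exact_mod_cast h)
  have hone : (1 : F) + 1 = 0 := by linear_combination h2
  -- key : f x ∈ S' ↔ x ∈ S
  have key : ∀ x : F, f x ∈ S' ↔ x ∈ S := by
    intro x
    rw [hf, hS']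
    by_cases hxS : x ∈ S
    · simp only [hxS, if_pos, iff_true]
      by_cases hx0 : x = 0
      · subst hx0
        right
        rw [if_pos hxS]
        simp
      · left
        exact ⟨x, hxS, hx0, by simp [hxS]⟩
    · simp only [hxS, if_neg, iff_false, if_false, add_zero, Set.mem_union,
        Set.mem_setOf_eq]
      rintro (⟨y, hyS, hy0, hxy⟩ | hmem)
      · by_cases hy1 : y = 1
        · subst hy1
          rw [inv_one, hone] at hxy
          have hx0 : x = 0 := by
            have := congrArg Inv.inv hxy
            simpa using this
          exact hxS (hx0 ▸ h01.mpr (by exact hyS))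
        · have h1y : (1 : F) + y ≠ 0 := by
            intro h
            exact hy1 (by linear_combination h - hone)
          have hx0 : x ≠ 0 := by
            intro h
            subst h
            rw [inv_zero] at hxy
            have hyinv : y⁻¹ = 1 := by linear_combination -hxy - hone
            exact hy1 (by rw [← inv_inv y, hyinv, inv_one])
          have hxval : x = y / (1 + y) := by
            have h1 : x⁻¹ = (1 + y) / y := by
              rw [hxy]; field_simp
            calc x = (x⁻¹)⁻¹ := (inv_inv x).symm
            _ = ((1 + y) / y)⁻¹ := by rw [h1]
            _ = y / (1 + y) := by rw [inv_div]
          exact hxS (hxval ▸ hclosed y hyS hy0 hy1)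
      · by_cases h0 : (0 : F) ∈ S
        · rw [if_pos h0] at hmem
          have hx1 : x⁻¹ = 1 := hmem
          have : x = 1 := by rw [← inv_inv x, hx1, inv_one]
          exact hxS (this ▸ h01.mp h0)
        · rw [if_neg h0] at hmem
          exact hmem
  have hgf : ∀ x, g (f x) = x := by
    intro x
    rw [hg]
    have hδ : (if f x ∈ S' then (1 : F) else 0) = (if x ∈ S then (1 : F) else 0) := by
      simp [key x]
    rw [hδ, hf]
    by_cases hxS : x ∈ S
    · rw [if_pos hxS, add_assoc, hone, add_zero, inv_inv]
    · rw [if_neg hxS, add_zero, add_zero, inv_inv]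
  have hinj : Function.Injective f := fun a b h => by rw [← hgf a, h, hgf b]
  have hsurj : Function.Surjective f := Finite.surjective_of_injective hinj
  intro x
  refine ⟨hgf x, ?_⟩
  obtain ⟨y, rfl⟩ := hsurj x
  rw [hgf y]
end

section
/- Let a ∈ F_{2^n} with a ≠ 0 and a ≠ 1. If the polynomial μ(x) = x^2 + a·x + a^2/(1+a) has two roots λ and ν in F_{2^n}, then Tr(1/(λ+1)) = 0 and Tr(1/(ν+1)) = 0, where Tr is the absolute trace from F_{2^n} to F_2. -/
/-!
The sum `∑ i < n, x ^ 2 ^ i` is the absolute trace of `F_{2^n}`: it is additive and vanishes on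
every `x ^ 2 + x`, since `(x ^ 2 + x) ^ 2 ^ i = x ^ 2 ^ (i + 1) - x ^ 2 ^ i` telescopes to
`x ^ 2 ^ n - x = 0`. For a root `l` of `μ`, the other root is `a + l`, and `w = l / a` satisfies
`w ^ 2 + w = 1 / (1 + a)`; clearing denominators gives
`1 / (l + 1) = ((a + l) ^ 2 + (a + l)) + (w ^ 2 + w)`, a sum of two elements of trace zero.
-/

open Finset

theorem sum_range_add_pow_expChar_pow {R : Type*} [CommSemiring R] {p : ℕ} [ExpChar R p]
    (n : ℕ) (x y : R) :
    ∑ i ∈ range n, (x + y) ^ p ^ i = ∑ i ∈ range n, x ^ p ^ i + ∑ i ∈ range n, y ^ p ^ i := by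
  simp_rw [add_pow_expChar_pow, sum_add_distrib]

namespace FiniteField

variable {K : Type*} [Field K] [Fintype K] {n : ℕ}

theorem sum_range_pow_char_sub_self_pow {p : ℕ} [ExpChar K p] (hcard : Fintype.card K = p ^ n)
    (x : K) : ∑ i ∈ range n, (x ^ p - x) ^ p ^ i = 0 := by
  have telescope (i : ℕ) : (x ^ p - x) ^ p ^ i = x ^ p ^ (i + 1) - x ^ p ^ i := by
    rw [sub_pow_expChar_pow, ← pow_mul, ← pow_succ']
  simp_rw [telescope, sum_range_sub (fun i ↦ x ^ p ^ i), ← hcard, pow_card, pow_zero, pow_one,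
    sub_self]

theorem sum_range_sq_add_self_pow [CharP K 2] (hcard : Fintype.card K = 2 ^ n) (x : K) :
    ∑ i ∈ range n, (x ^ 2 + x) ^ 2 ^ i = 0 := by
  simpa only [CharTwo.sub_eq_add] using sum_range_pow_char_sub_self_pow hcard x

theorem charP_two_of_card_eq_two_pow (hn : 0 < n) (hcard : Fintype.card K = 2 ^ n) :
    CharP K 2 :=
  ringChar.eq_iff.mp <| even_card_iff_char_two.mpr <| by
    rw [hcard, Nat.pow_mod, Nat.mod_self, zero_pow hn.ne', Nat.zero_mod]

end FiniteField

section CharTwo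

variable {F : Type*} [Field F] [CharP F 2] {a l : F}

theorem CharTwo.one_add_ne_zero_of_ne_one (ha1 : a ≠ 1) : 1 + a ≠ 0 :=
  fun h ↦ ha1 (CharTwo.add_eq_zero.mp h).symm

theorem sq_add_mul_mul_one_add_of_root (ha1 : a ≠ 1)
    (hl : l ^ 2 + a * l + a ^ 2 / (1 + a) = 0) :
    (l ^ 2 + a * l) * (1 + a) = a ^ 2 := by
  have := CharTwo.one_add_ne_zero_of_ne_one ha1
  field_simp at hl
  linear_combination hl - a ^ 2 * CharTwo.two_eq_zero (R := F)

theorem div_sq_add_div_of_root (ha0 : a ≠ 0) (ha1 : a ≠ 1)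
    (hl : l ^ 2 + a * l + a ^ 2 / (1 + a) = 0) :
    (l / a) ^ 2 + l / a = (1 + a)⁻¹ := by
  have := CharTwo.one_add_ne_zero_of_ne_one ha1
  field_simp
  linear_combination sq_add_mul_mul_one_add_of_root ha1 hl

theorem inv_add_one_of_root (ha1 : a ≠ 1) (hl : l ^ 2 + a * l + a ^ 2 / (1 + a) = 0) :
    (l + 1)⁻¹ = ((a + l) ^ 2 + (a + l)) + (1 + a)⁻¹ := by
  have h1a := CharTwo.one_add_ne_zero_of_ne_one ha1
  have hroot := sq_add_mul_mul_one_add_of_root ha1 hl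
  have two : (2 : F) = 0 := CharTwo.two_eq_zero
  have hl1 : l + 1 ≠ 0 := by
    intro h
    obtain rfl : l = 1 := CharTwo.add_eq_zero.mp h
    exact one_ne_zero (by linear_combination hroot - a * two)
  field_simp
  -- the quotient of the cleared identity by `hroot` over `ℤ`; the remainder is even
  linear_combination -(l + 2 + a) * hroot - (l * (a ^ 2 + a + 1) + a ^ 3 + 2 * a ^ 2) * two

theorem FiniteField.sum_range_inv_add_one_pow_of_root [Fintype F] {n : ℕ}
    (hcard : Fintype.card F = 2 ^ n) (ha0 : a ≠ 0) (ha1 : a ≠ 1)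
    (hl : l ^ 2 + a * l + a ^ 2 / (1 + a) = 0) :
    ∑ i ∈ range n, ((l + 1)⁻¹) ^ 2 ^ i = 0 := by
  rw [inv_add_one_of_root ha1 hl, ← div_sq_add_div_of_root ha0 ha1 hl,
    sum_range_add_pow_expChar_pow, sum_range_sq_add_self_pow hcard,
    sum_range_sq_add_self_pow hcard, add_zero]

end CharTwo

theorem stmt3_general {F : Type*} [Field F] [Fintype F] {n : ℕ} (hn : 0 < n)
    (hcard : Fintype.card F = 2 ^ n) (a l v : F) (ha0 : a ≠ 0) (ha1 : a ≠ 1)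
    (hl : l ^ 2 + a * l + a ^ 2 / (1 + a) = 0)
    (hv : v ^ 2 + a * v + a ^ 2 / (1 + a) = 0) :
    (∑ i ∈ Finset.range n, ((l + 1)⁻¹) ^ 2 ^ i) = 0 ∧
      (∑ i ∈ Finset.range n, ((v + 1)⁻¹) ^ 2 ^ i) = 0 := by
  have := FiniteField.charP_two_of_card_eq_two_pow hn hcard
  exact ⟨FiniteField.sum_range_inv_add_one_pow_of_root hcard ha0 ha1 hl,
    FiniteField.sum_range_inv_add_one_pow_of_root hcard ha0 ha1 hv⟩

theorem stmt3 {F : Type*} [Field F] [Fintype F] {n : ℕ} (hn : 0 < n)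
    (hcard : Fintype.card F = 2 ^ n) (a l v : F) (ha0 : a ≠ 0) (ha1 : a ≠ 1)
    (hlv : l ≠ v)
    (hl : l ^ 2 + a * l + a ^ 2 / (1 + a) = 0)
    (hv : v ^ 2 + a * v + a ^ 2 / (1 + a) = 0) :
    (∑ i ∈ Finset.range n, ((l + 1)⁻¹) ^ 2 ^ i) = 0 ∧
      (∑ i ∈ Finset.range n, ((v + 1)⁻¹) ^ 2 ^ i) = 0 :=
  stmt3_general hn hcard a l v ha0 ha1 hl hv
end

section
/- Let k₁ and k₂ be divisors of n, identify F_{2^{k₁}} and F_{2^{k₂}} with subfields of F_{2^n}, and let S = F_{2^{k₁}} ∪ F_{2^{k₂}}. Then for any x, y ∈ S with x + y ∉ S and y ≠ 1, we have δ_S(y^2/(1+y)) ≠ δ_S(x^2 + x·y), where δ_S is the characteristic function of S. -/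
open scoped Classical

/-!
Both subfields are fixed fields of powers of the Frobenius map, and these ring endomorphisms
commute. Since `y ^ 2 / (1 + y)` is built from `y` by field operations, it always lies in `S`.
Suppose `x ^ 2 + x * y` lies in the fixed field of `σ`. The only delicate case is `y` fixed by `σ`
and `x` only in the other field: then `σ x` and `x` are roots of
`T ^ 2 + y * T - (x ^ 2 + x * y)`, so `σ x = x` or `σ x = -(x + y)`, and in the second case
`x + y` lies in the other field because `σ` preserves it. Either way `x + y ∈ S`.
-/

namespace RingHom

variable {F : Type*} [Field F]

theorem map_mem_eqLocusField_id_of_comp_comm {σ τ : F →+* F} (hcomm : σ.comp τ = τ.comp σ)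
    {x : F} (hx : x ∈ τ.eqLocusField (.id F)) : σ x ∈ τ.eqLocusField (.id F) := by
  rw [mem_eqLocusField, id_apply] at hx ⊢
  rw [← comp_apply, ← hcomm, comp_apply, hx]

theorem map_eq_or_map_eq_neg_add_of_map_sq_add_mul {σ : F →+* F} {x y : F} (hy : σ y = y)
    (hxy : σ (x ^ 2 + x * y) = x ^ 2 + x * y) : σ x = x ∨ σ x = -(x + y) := by
  rw [map_add, map_pow, map_mul, hy] at hxy
  have hfactor : (σ x - x) * (σ x + (x + y)) = 0 := by linear_combination hxy
  rcases mul_eq_zero.mp hfactor with h | h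
  · exact .inl (sub_eq_zero.mp h)
  · exact .inr (eq_neg_of_add_eq_zero_left h)

theorem add_mem_union_of_sq_add_mul_mem {σ τ : F →+* F} (hcomm : σ.comp τ = τ.comp σ)
    {x y : F} (hx : x ∈ σ.eqLocusField (.id F) ∨ x ∈ τ.eqLocusField (.id F))
    (hy : y ∈ σ.eqLocusField (.id F) ∨ y ∈ τ.eqLocusField (.id F))
    (hxy : x ^ 2 + x * y ∈ σ.eqLocusField (.id F)) :
    x + y ∈ σ.eqLocusField (.id F) ∨ x + y ∈ τ.eqLocusField (.id F) := by
  rcases hx with hxσ | hxτ <;> rcases hy with hyσ | hyτ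
  · exact .inl (add_mem hxσ hyσ)
  · by_cases hx0 : x = 0
    · exact .inr (by simpa [hx0] using hyτ)
    · have hquot : x + y = (x ^ 2 + x * y) / x := by field_simp
      exact .inl (hquot ▸ div_mem hxy hxσ)
  · rcases map_eq_or_map_eq_neg_add_of_map_sq_add_mul hyσ hxy with hfix | hneg
    · exact .inl (add_mem hfix hyσ)
    · have hσx := map_mem_eqLocusField_id_of_comp_comm hcomm hxτ
      rw [hneg] at hσx
      exact .inr (by simpa using neg_mem hσx)
  · exact .inr (add_mem hxτ hyτ)

end RingHom

theorem stmt5_general {F : Type*} [Field F] [Fintype F] {n k₁ k₂ : ℕ}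
    (hcard : Fintype.card F = 2 ^ n)
    (S : Set F)
    (hS : S = {z : F | z ^ 2 ^ k₁ = z} ∪ {z : F | z ^ 2 ^ k₂ = z})
    (x y : F) (hx : x ∈ S) (hy : y ∈ S) (hxy : x + y ∉ S) :
    (if y ^ 2 / (1 + y) ∈ S then (1 : F) else 0) ≠
      (if x ^ 2 + x * y ∈ S then (1 : F) else 0) := by
  have : CharP F 2 := charP_of_card_eq_prime_pow hcard
  set σ₁ := iterateFrobenius F 2 k₁
  set σ₂ := iterateFrobenius F 2 k₂
  have hcomm : σ₁.comp σ₂ = σ₂.comp σ₁ := by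
    rw [← iterateFrobenius_add, ← iterateFrobenius_add, add_comm]
  have hmem : ∀ z, z ∈ S ↔ z ∈ σ₁.eqLocusField (.id F) ∨ z ∈ σ₂.eqLocusField (.id F) := by
    subst hS; exact fun _ ↦ Iff.rfl
  have hquot : y ^ 2 / (1 + y) ∈ S := by
    have hK : ∀ K : Subfield F, y ∈ K → y ^ 2 / (1 + y) ∈ K := fun K h ↦
      div_mem (pow_mem h 2) (add_mem (one_mem K) h)
    exact (hmem _).mpr (((hmem y).mp hy).imp (hK _) (hK _))
  have hprod : x ^ 2 + x * y ∉ S := by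
    rw [hmem]
    rintro (h | h)
    · exact hxy ((hmem _).mpr (RingHom.add_mem_union_of_sq_add_mul_mem hcomm
        ((hmem x).mp hx) ((hmem y).mp hy) h))
    · exact hxy ((hmem _).mpr (RingHom.add_mem_union_of_sq_add_mul_mem hcomm.symm
        ((hmem x).mp hx).symm ((hmem y).mp hy).symm h).symm)
  rw [if_pos hquot, if_neg hprod]
  exact one_ne_zero

theorem stmt5 {F : Type*} [Field F] [Fintype F] {n k₁ k₂ : ℕ}
    (hcard : Fintype.card F = 2 ^ n) (hk₁ : k₁ ∣ n) (hk₂ : k₂ ∣ n)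
    (hk₁0 : 0 < k₁) (hk₂0 : 0 < k₂)
    (S : Set F)
    (hS : S = {z : F | z ^ 2 ^ k₁ = z} ∪ {z : F | z ^ 2 ^ k₂ = z})
    (x y : F) (hx : x ∈ S) (hy : y ∈ S) (hxy : x + y ∉ S) (hy1 : y ≠ 1) :
    (if y ^ 2 / (1 + y) ∈ S then (1 : F) else 0) ≠
      (if x ^ 2 + x * y ∈ S then (1 : F) else 0) :=
  stmt5_general hcard S hS x y hx hy hxy
end

section
/- Let k₁, k₂ divide n and let x ∈ F_{2^{k₁}} \ F_{2^{k₂}} and y ∈ F_{2^{k₂}} \ F_{2^{k₁}} be elements of F_{2^n}. Then x^2 + x·y ∉ F_{2^{k₂}}. -/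
theorem stmt6 {F : Type*} [Field F] [Fintype F] {n k₁ k₂ : ℕ}
    (hcard : Fintype.card F = 2 ^ n) (hk₁ : k₁ ∣ n) (hk₂ : k₂ ∣ n)
    (hk₁0 : 0 < k₁) (hk₂0 : 0 < k₂)
    (x y : F)
    (hx : x ^ 2 ^ k₁ = x) (hx' : ¬ x ^ 2 ^ k₂ = x)
    (hy : y ^ 2 ^ k₂ = y) (hy' : ¬ y ^ 2 ^ k₁ = y) :
    ¬ (x ^ 2 + x * y) ^ 2 ^ k₂ = x ^ 2 + x * y := by
  -- char F = 2
  obtain ⟨p, hch⟩ := CharP.exists F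
  haveI := hch
  have hp : p.Prime := CharP.char_is_prime F p
  haveI : Fact p.Prime := ⟨hp⟩
  obtain ⟨m, -, hm⟩ := FiniteField.card F p
  have hp2 : p = 2 := by
    have hpdvd : p ∣ 2 ^ n := by
      rw [← hcard, hm]; exact dvd_pow_self p m.2.ne'
    exact (Nat.prime_dvd_prime_iff_eq hp Nat.prime_two).mp (hp.dvd_of_dvd_pow hpdvd)
  subst hp2
  haveI : CharP F 2 := hch
  intro h
  have hfrob : (x ^ 2 + x * y) ^ 2 ^ k₂ = (x ^ 2 ^ k₂) ^ 2 + x ^ 2 ^ k₂ * y := by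
    rw [add_pow_char_pow, mul_pow, hy, ← pow_mul, ← pow_mul, mul_comm 2 (2 ^ k₂)]
  rw [hfrob] at h
  set X := x ^ 2 ^ k₂ with hX
  have hd : X - x ≠ 0 := sub_ne_zero.mpr hx'
  have two : (2 : F) = 0 := CharTwo.two_eq_zero
  have key : (X - x) * (X - x) = (X - x) * y := by
    linear_combination h + (x ^ 2 - X * x - X * y + x * y) * two
  have hyeq : y = X - x := (mul_left_cancel₀ hd key).symm
  apply hy'
  rw [hyeq, hX]
  rw [sub_pow_char_pow, ← pow_mul, mul_comm, pow_mul, hx]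
end

section
/- Let n be even with n ≥ 6 and let ω ∈ F_{2^n} be a primitive third root of unity. Define f(x) = x^{-1} + δ_S(x) with S = {ω, ω^2} ⊆ F_{2^n} (convention 0^{-1} = 0). Then f is a bijection of F_{2^n}, and for every a ∈ F_{2^n} with a ≠ 0 and every b ∈ F_{2^n}, the equation f(x + a) + f(x) = b has at most 4 solutions x in F_{2^n}, provided n/2 is odd. -/
/-!
In characteristic 2, `f = x⁻¹ + δ_S(x)` is inversion composed with the transposition of `ω` and
`ω²`, hence bijective. Moreover `f (x + a) + f x` is `x⁻¹ + (x + a)⁻¹`, plus `1` when exactly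
one of `x`, `x + a` lies in `S`. So the solutions of `f (x + a) + f x = b` lie in the fibres over
`b` and `b + 1` of `x ↦ x⁻¹ + (x + a)⁻¹`, and these fibres are the roots of a quadratic, except
the fibre over `a⁻¹`, which also contains `0` and `a`. When `b` or `b + 1` equals `a⁻¹`, the
extra solutions would give a root of `X² + ωX + 1`, hence (after scaling by `ω²`) a root of
`X⁴ + X + 1`, which `F` does not have when `n ≡ 2 (mod 4)`.
-/

open scoped Classical

lemma Nat.gcd_fifteen_two_pow_sub_one {n : ℕ} (hn : n % 4 = 2) : Nat.gcd 15 (2 ^ n - 1) = 3 := by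
  have h : 2 ^ n % 15 = 4 := by
    rw [← Nat.div_add_mod n 4, hn, pow_add, pow_mul, Nat.mul_mod, Nat.pow_mod]
    norm_num
  have h1 : 1 ≤ 2 ^ n := Nat.one_le_two_pow
  rw [Nat.gcd_rec, show (2 ^ n - 1) % 15 = 3 by omega]
  rfl

lemma ncard_setOf_mul_add_eq_le_two {F : Type*} [Field F] (a d : F) :
    {x : F | x * (x + a) = d}.ncard ≤ 2 := by
  rcases Set.eq_empty_or_nonempty {x : F | x * (x + a) = d} with h | ⟨x₀, hx₀⟩
  · simp [h]
  replace hx₀ : x₀ * (x₀ + a) = d := hx₀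
  have hsub : {x : F | x * (x + a) = d} ⊆ {x₀, -(x₀ + a)} := by
    intro x hx
    replace hx : x * (x + a) = d := hx
    have : (x - x₀) * (x + x₀ + a) = 0 := by linear_combination hx - hx₀
    rcases mul_eq_zero.mp this with h | h
    · exact Or.inl (sub_eq_zero.mp h)
    · exact Or.inr (Set.mem_singleton_iff.mpr (by linear_combination h))
  calc {x : F | x * (x + a) = d}.ncard ≤ ({x₀, -(x₀ + a)} : Set F).ncard :=
        Set.ncard_le_ncard hsub (Set.toFinite _)
    _ ≤ 2 := (Set.ncard_insert_le _ _).trans (by simp)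

section CharTwo

variable {F : Type*} [Field F] [CharP F 2]

lemma pow_four_add_self_add_one_ne_zero [Fintype F] {n : ℕ} (hcard : Fintype.card F = 2 ^ n)
    (hn : n % 4 = 2) (z : F) : z ^ 4 + z + 1 ≠ 0 := by
  intro hz
  have h2 : (2 : F) = 0 := CharTwo.two_eq_zero
  have hz0 : z ≠ 0 := by rintro rfl; norm_num at hz
  have h4 : z ^ 4 = z + 1 := by linear_combination hz - (z + 1) * h2
  -- `z` lies in `𝔽₁₆`, while `𝔽₁₆ ∩ F = 𝔽₄` because `4 ∤ n`
  have h16 : z ^ 16 = z := by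
    calc z ^ 16 = (z ^ 4) ^ 4 := by ring
      _ = (z + 1) ^ 4 := by rw [h4]
      _ = z := by linear_combination h4 + (2 * z ^ 3 + 3 * z ^ 2 + 2 * z + 1) * h2
  have h15 : z ^ 15 = 1 := mul_left_cancel₀ hz0 (by linear_combination h16)
  have hq : z ^ (2 ^ n - 1) = 1 := hcard ▸ FiniteField.pow_card_sub_one_eq_one z hz0
  have h3 : z ^ 3 = 1 := by
    simpa [Nat.gcd_fifteen_two_pow_sub_one hn] using pow_gcd_eq_one.mpr ⟨h15, hq⟩
  exact one_ne_zero (by linear_combination hz - z * h3 - z * h2 : (1 : F) = 0)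

lemma sq_add_mul_add_one_ne_zero {ω : F} (hω : ω ^ 2 + ω + 1 = 0)
    (hquartic : ∀ z : F, z ^ 4 + z + 1 ≠ 0) (x : F) : x ^ 2 + ω * x + 1 ≠ 0 := by
  intro h
  have h2 : (2 : F) = 0 := CharTwo.two_eq_zero
  have hω3 : ω ^ 3 = 1 := by linear_combination (ω - 1) * hω
  have hx4 : x ^ 4 = x + ω := by
    linear_combination (x ^ 2 - ω * x + ω ^ 2 - 1) * h + (-(ω - 1) * x - 1) * hω +
      (ω * x - x + 1) * h2
  -- `z = ω² x` solves `z² + z = ω`, hence `z⁴ + z = ω² + ω = 1`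
  apply hquartic (ω ^ 2 * x)
  linear_combination ω ^ 8 * hx4 + (x * ω ^ 2 * (ω ^ 3 + 1) + ω ^ 6 + ω ^ 3 + 1) * hω3 +
    (ω ^ 2 * x + 1) * h2

lemma inv_eq_add_one_of_sq_add_add_one {ω : F} (hω : ω ^ 2 + ω + 1 = 0) : ω⁻¹ = ω + 1 :=
  inv_eq_of_mul_eq_one_right (by linear_combination hω - (CharTwo.two_eq_zero : (2 : F) = 0))

lemma inv_add_inv_add_eq_div {a x : F} (hx : x ≠ 0) (hxa : x + a ≠ 0) :
    x⁻¹ + (x + a)⁻¹ = a / (x * (x + a)) := by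
  rw [inv_add_inv hx hxa, CharTwo.add_cancel_left]

lemma inv_add_inv_add_eq_iff {a c x : F} (ha : a ≠ 0) (hc : c ≠ a⁻¹) :
    x⁻¹ + (x + a)⁻¹ = c ↔ c * (x * (x + a)) = a := by
  by_cases hx : x = 0
  · subst hx
    simp [Ne.symm hc, Ne.symm ha]
  by_cases hxa : x + a = 0
  · obtain rfl : x = a := CharTwo.add_eq_zero.mp hxa
    simp [hxa, Ne.symm hc, Ne.symm ha]
  rw [inv_add_inv_add_eq_div hx hxa, div_eq_iff (mul_ne_zero hx hxa), eq_comm]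

lemma eq_zero_or_eq_or_mul_add_eq_of_inv_add_inv_add_eq_inv {a x : F} (ha : a ≠ 0)
    (h : x⁻¹ + (x + a)⁻¹ = a⁻¹) : x = 0 ∨ x = a ∨ x * (x + a) = a * a := by
  by_cases hx : x = 0
  · exact Or.inl hx
  by_cases hxa : x + a = 0
  · exact Or.inr (Or.inl (CharTwo.add_eq_zero.mp hxa))
  rw [inv_add_inv_add_eq_div hx hxa, div_eq_iff (mul_ne_zero hx hxa),
    eq_inv_mul_iff_mul_eq₀ ha] at h
  exact Or.inr (Or.inr h.symm)

lemma ncard_setOf_inv_add_inv_add_eq_le_two [Finite F] {a c : F} (ha : a ≠ 0) (hc : c ≠ a⁻¹) :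
    {x : F | x⁻¹ + (x + a)⁻¹ = c}.ncard ≤ 2 := by
  by_cases hc0 : c = 0
  · have : {x : F | x⁻¹ + (x + a)⁻¹ = c} = ∅ := by
      ext x
      rw [Set.mem_ofPred_eq, inv_add_inv_add_eq_iff ha hc, hc0]
      simp [Ne.symm ha]
    simp [this]
  refine le_trans (Set.ncard_le_ncard fun x hx => ?_) (ncard_setOf_mul_add_eq_le_two a (a / c))
  rw [Set.mem_ofPred_eq, eq_div_iff hc0, mul_comm]
  exact (inv_add_inv_add_eq_iff ha hc).mp hx

lemma ncard_setOf_inv_add_inv_add_eq_inv_le_four [Finite F] {a : F} (ha : a ≠ 0) :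
    {x : F | x⁻¹ + (x + a)⁻¹ = a⁻¹}.ncard ≤ 4 := by
  have hsub : {x : F | x⁻¹ + (x + a)⁻¹ = a⁻¹} ⊆
      insert 0 (insert a {x : F | x * (x + a) = a * a}) :=
    fun x hx => eq_zero_or_eq_or_mul_add_eq_of_inv_add_inv_add_eq_inv ha hx
  calc _ ≤ (insert 0 (insert a {x : F | x * (x + a) = a * a})).ncard := Set.ncard_le_ncard hsub
    _ ≤ 4 := by
      linarith [Set.ncard_insert_le (0 : F) (insert a {x : F | x * (x + a) = a * a}),
        Set.ncard_insert_le a {x : F | x * (x + a) = a * a},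
        ncard_setOf_mul_add_eq_le_two a (a * a)]

lemma inv_add_inv_add_ne_self {a : F} (ha : a ^ 2 + a + 1 = 0)
    (hquartic : ∀ z : F, z ^ 4 + z + 1 ≠ 0) (x : F) : x⁻¹ + (x + a)⁻¹ ≠ a := by
  have ha0 : a ≠ 0 := by rintro rfl; norm_num at ha
  have hainv : a ≠ a⁻¹ := by simp [inv_eq_add_one_of_sq_add_add_one ha]
  rw [Ne, inv_add_inv_add_eq_iff ha0 hainv]
  intro h
  apply sq_add_mul_add_one_ne_zero ha hquartic x
  have hx : x * (x + a) = 1 := mul_left_cancel₀ ha0 (by rw [h, mul_one])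
  linear_combination hx + (CharTwo.two_eq_zero : (2 : F) = 0)

lemma inv_add_inv_add_ne_inv_add_one {ω a : F} (hω : ω ^ 2 + ω + 1 = 0)
    (hquartic : ∀ z : F, z ^ 4 + z + 1 ≠ 0) (ha : a ≠ 0) : ω⁻¹ + (ω + a)⁻¹ ≠ a⁻¹ + 1 := by
  have h2 : (2 : F) = 0 := CharTwo.two_eq_zero
  rw [Ne, inv_add_inv_add_eq_iff ha (by simp)]
  intro h
  apply sq_add_mul_add_one_ne_zero hω hquartic a
  have h' : (1 + a) * (ω * (ω + a)) = a ^ 2 := by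
    linear_combination a * h - ω * (ω + a) * mul_inv_cancel₀ ha
  linear_combination ω * h' + (1 - ω - a * ω - a ^ 2) * hω + (a ^ 2 + a * ω + a ^ 2 * ω) * h2

lemma inv_add_inv_add_ne_inv_add_one_of_mem {S : Set F} (hS : ∀ s ∈ S, s ^ 2 + s + 1 = 0)
    (hquartic : ∀ z : F, z ^ 4 + z + 1 ≠ 0) {a x : F} (ha : a ≠ 0) (hx : x ∈ S ∨ x + a ∈ S) :
    x⁻¹ + (x + a)⁻¹ ≠ a⁻¹ + 1 := by
  rcases hx with hx | hxa
  · exact inv_add_inv_add_ne_inv_add_one (hS x hx) hquartic ha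
  · have := inv_add_inv_add_ne_inv_add_one (hS (x + a) hxa) hquartic ha
    rwa [CharTwo.add_cancel_right, add_comm] at this

noncomputable def patchedInv (S : Set F) (x : F) : F := x⁻¹ + if x ∈ S then 1 else 0

lemma patchedInv_eq_inv_swap {ω : F} (hω : ω ^ 2 + ω + 1 = 0) (x : F) :
    patchedInv {ω, ω ^ 2} x = (Equiv.swap ω (ω ^ 2) x)⁻¹ := by
  have hinv : ω⁻¹ = ω + 1 := inv_eq_add_one_of_sq_add_add_one hω
  have h2 : (2 : F) = 0 := CharTwo.two_eq_zero
  have hω2 : ω ^ 2 = ω + 1 := by linear_combination hω - (ω + 1) * h2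
  have hinv2 : (ω + 1)⁻¹ = ω := inv_eq_of_mul_eq_one_right (by linear_combination hω - h2)
  rw [hω2]
  by_cases hx1 : x = ω
  · subst hx1
    simp [patchedInv, hinv, hinv2, add_assoc, CharTwo.add_self_eq_zero]
  by_cases hx2 : x = ω + 1
  · subst hx2
    simp [patchedInv, hinv, hinv2]
  rw [patchedInv, if_neg (by simp [hx1, hx2]), Equiv.swap_apply_of_ne_of_ne hx1 hx2, add_zero]

lemma patchedInv_bijective {ω : F} (hω : ω ^ 2 + ω + 1 = 0) :
    Function.Bijective (patchedInv ({ω, ω ^ 2} : Set F)) := by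
  rw [show patchedInv {ω, ω ^ 2} = Inv.inv ∘ Equiv.swap ω (ω ^ 2) from
    funext (patchedInv_eq_inv_swap hω)]
  exact inv_involutive.bijective.comp (Equiv.bijective _)

lemma patchedInv_add_patchedInv_eq (S : Set F) (a x : F) :
    patchedInv S (x + a) + patchedInv S x =
      x⁻¹ + (x + a)⁻¹ + if (x + a ∈ S ↔ x ∈ S) then 0 else 1 := by
  have h2 : (2 : F) = 0 := CharTwo.two_eq_zero
  by_cases hxa : x + a ∈ S <;> by_cases hx : x ∈ S <;>
    simp [patchedInv, hxa, hx] <;> first | ring1 | linear_combination h2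

lemma ncard_setOf_patchedInv_add_patchedInv_eq_le (S : Set F) [Finite F] (a b : F) :
    {x : F | patchedInv S (x + a) + patchedInv S x = b}.ncard ≤
      ({x : F | x⁻¹ + (x + a)⁻¹ = b} ∩ {x | x + a ∈ S ↔ x ∈ S}).ncard +
        ({x : F | x⁻¹ + (x + a)⁻¹ = b + 1} \ {x | x + a ∈ S ↔ x ∈ S}).ncard := by
  refine (Set.ncard_le_ncard fun x hx => ?_).trans (Set.ncard_union_le _ _)
  replace hx : patchedInv S (x + a) + patchedInv S x = b := hx
  rw [patchedInv_add_patchedInv_eq] at hx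
  by_cases hP : x + a ∈ S ↔ x ∈ S
  · rw [if_pos hP, add_zero] at hx
    exact Or.inl ⟨hx, hP⟩
  · rw [if_neg hP, CharTwo.add_eq_iff_eq_add] at hx
    exact Or.inr ⟨hx, hP⟩

theorem ncard_setOf_patchedInv_add_patchedInv_eq_le_four [Finite F] {S : Set F}
    (hS : ∀ s ∈ S, s ^ 2 + s + 1 = 0) (hquartic : ∀ z : F, z ^ 4 + z + 1 ≠ 0) {a : F}
    (ha : a ≠ 0) (b : F) : {x : F | patchedInv S (x + a) + patchedInv S x = b}.ncard ≤ 4 := by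
  have h0S : (0 : F) ∉ S := fun h => by simpa using hS 0 h
  refine (ncard_setOf_patchedInv_add_patchedInv_eq_le S a b).trans ?_
  by_cases hb : b = a⁻¹
  · subst hb
    refine add_le_add (b := 4) (d := 0) ?_ ?_
    · exact (Set.ncard_le_ncard Set.inter_subset_left).trans
        (ncard_setOf_inv_add_inv_add_eq_inv_le_four ha)
    · rw [Nat.le_zero, Set.ncard_eq_zero]
      exact Set.eq_empty_of_forall_notMem fun x ⟨hI, hP⟩ =>
        inv_add_inv_add_ne_inv_add_one_of_mem hS hquartic ha
          (by by_contra! h; exact hP (iff_of_false h.2 h.1)) hI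
  by_cases hb' : b = a⁻¹ + 1
  · subst hb'
    rw [CharTwo.add_cancel_right]
    by_cases haS : a ∈ S
    · have hainv : a⁻¹ + 1 = a := by
        rw [inv_eq_add_one_of_sq_add_add_one (hS a haS), CharTwo.add_cancel_right]
      refine add_le_add (b := 0) (d := 4) ?_ ?_
      · rw [Nat.le_zero, Set.ncard_eq_zero]
        exact Set.eq_empty_of_forall_notMem fun x hx =>
          inv_add_inv_add_ne_self (hS a haS) hquartic x (hx.1.trans hainv)
      · exact (Set.ncard_le_ncard Set.sdiff_subset).trans
          (ncard_setOf_inv_add_inv_add_eq_inv_le_four ha)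
    refine add_le_add (b := 2) (d := 2) ?_ ?_
    · exact (Set.ncard_le_ncard Set.inter_subset_left).trans
        (ncard_setOf_inv_add_inv_add_eq_le_two ha (by simp))
    refine (Set.ncard_le_ncard fun x hx => ?_).trans (ncard_setOf_mul_add_eq_le_two a (a * a))
    obtain ⟨hx, hP⟩ := hx
    rcases eq_zero_or_eq_or_mul_add_eq_of_inv_add_inv_add_eq_inv ha hx with rfl | rfl | h
    · exact absurd (by simp [haS, h0S]) hP
    · exact absurd (by simp [CharTwo.add_self_eq_zero, haS, h0S]) hP
    · exact h
  have hb1 : b + 1 ≠ a⁻¹ := fun h => hb' (CharTwo.add_eq_iff_eq_add.mp h)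
  refine add_le_add (b := 2) (d := 2) ?_ ?_
  · exact (Set.ncard_le_ncard Set.inter_subset_left).trans
      (ncard_setOf_inv_add_inv_add_eq_le_two ha hb)
  · exact (Set.ncard_le_ncard Set.sdiff_subset).trans
      (ncard_setOf_inv_add_inv_add_eq_le_two ha hb1)

end CharTwo

theorem stmt7_general {F : Type*} [Field F] [Fintype F] {n : ℕ}
    (hcard : Fintype.card F = 2 ^ n) (hne : Even n)
    (hodd : Odd (n / 2)) (ω : F) (hω : ω ^ 2 + ω + 1 = 0)
    (f : F → F)
    (hf : ∀ x, f x = x⁻¹ + (if x ∈ ({ω, ω ^ 2} : Set F) then (1 : F) else 0)) :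
    Function.Bijective f ∧
      ∀ a : F, a ≠ 0 → ∀ b : F,
        Set.ncard {x : F | f (x + a) + f x = b} ≤ 4 := by
  have : CharP F 2 := charP_of_card_eq_prime_pow hcard
  have hn : n % 4 = 2 := by
    obtain ⟨k, hk⟩ := hne
    obtain ⟨m, hm⟩ := hodd
    omega
  have hS : ∀ s ∈ ({ω, ω ^ 2} : Set F), s ^ 2 + s + 1 = 0 := by
    rintro s (rfl | rfl)
    · exact hω
    · linear_combination (ω ^ 2 - ω + 1) * hω
  obtain rfl : f = patchedInv {ω, ω ^ 2} := funext fun x => by rw [hf, patchedInv]; congr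
  exact ⟨patchedInv_bijective hω, fun a ha b =>
    ncard_setOf_patchedInv_add_patchedInv_eq_le_four hS
      (pow_four_add_self_add_one_ne_zero hcard hn) ha b⟩

theorem stmt7 {F : Type*} [Field F] [Fintype F] {n : ℕ}
    (hcard : Fintype.card F = 2 ^ n) (hn6 : 6 ≤ n) (hne : Even n)
    (hodd : Odd (n / 2)) (ω : F) (hω : ω ^ 2 + ω + 1 = 0)
    (f : F → F)
    (hf : ∀ x, f x = x⁻¹ + (if x ∈ ({ω, ω ^ 2} : Set F) then (1 : F) else 0)) :
    Function.Bijective f ∧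
      ∀ a : F, a ≠ 0 → ∀ b : F,
        Set.ncard {x : F | f (x + a) + f x = b} ≤ 4 :=
  stmt7_general hcard hne hodd ω hω f hf
end

section
/- For every x ∈ F_8 ⊆ F_{2^n} (with 3 | n), the absolute trace from F_8 to F_2 of 1/(1 + x + x^{-1}) equals 1, where 0^{-1} = 0 (so for x = 0 the expression is 1/(1+0+0) = 1). Equivalently: for all x in the field F_8, Tr^3_1(1/(1 + x + x^{2^3 - 2})) = 1. -/
/-!
In characteristic 2, for `x ≠ 0` we have `(1 + x + x⁻¹)⁻¹ = x / (x² + x + 1)`, and the denominator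
does not vanish on `𝔽₈`: a root would satisfy `x³ = 1`, impossible for `x ≠ 1` since `3 ∤ 7`.
Clearing denominators, the trace identity becomes a polynomial identity modulo `2` and `x⁷ - 1`.
-/

theorem FiniteField.charP_two_of_card_eq_eight {F : Type*} [Field F] [Fintype F]
    (hcard : Fintype.card F = 8) : CharP F 2 := by
  have h8 : (2 : F) ^ 3 = 0 := by
    rw [← FiniteField.cast_card_eq_zero F, hcard]
    norm_num
  exact CharTwo.of_one_ne_zero_of_two_eq_zero one_ne_zero (pow_eq_zero_iff three_ne_zero |>.mp h8)

theorem inv_one_add_add_inv {F : Type*} [Field F] {x : F} (hx : x ≠ 0) :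
    (1 + x + x⁻¹)⁻¹ = x / (x ^ 2 + x + 1) := by
  rw [show 1 + x + x⁻¹ = (x ^ 2 + x + 1) / x by field_simp; ring, inv_div]

namespace CharTwo

variable {F : Type*} [Field F] [CharP F 2]

theorem sq_add_self_add_one_ne_zero {x : F} (hx : x ^ 8 = x) : x ^ 2 + x + 1 ≠ 0 := by
  have h2 : (2 : F) = 0 := two_eq_zero
  intro hroot
  have hcube : x ^ 3 = 1 := by linear_combination (x + 1) * hroot - (x ^ 2 + x + 1) * h2
  have hsq : x ^ 2 = x := by linear_combination hx - x ^ 2 * (x ^ 3 + 1) * hcube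
  rcases mul_eq_zero.mp (show x * (x - 1) = 0 by linear_combination hsq) with h0 | h1
  · simp [h0] at hroot
  · exact one_ne_zero (α := F) (by linear_combination hroot - (x + 2) * h1 - h2)

theorem trace_div_sq_add_self_add_one {x : F} (hx : x ^ 8 = x) (hx0 : x ≠ 0) :
    x / (x ^ 2 + x + 1) + (x / (x ^ 2 + x + 1)) ^ 2 + (x / (x ^ 2 + x + 1)) ^ 4 = 1 := by
  set d := x ^ 2 + x + 1
  have hd : d ≠ 0 := sq_add_self_add_one_ne_zero hx
  have h2 : (2 : F) = 0 := two_eq_zero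
  have hx7 : x ^ 7 = 1 := mul_left_cancel₀ hx0 (by linear_combination hx)
  have hcleared : x * d ^ 3 + x ^ 2 * d ^ 2 + x ^ 4 = d ^ 4 := by
    linear_combination (-x - 3) * hx7 +
      (-3 * x ^ 6 - 4 * x ^ 5 - 4 * x ^ 4 - 4 * x ^ 3 - 3 * x ^ 2 - 2 * x - 2) * h2
  calc x / d + (x / d) ^ 2 + (x / d) ^ 4 = (x * d ^ 3 + x ^ 2 * d ^ 2 + x ^ 4) / d ^ 4 := by
        field_simp
    _ = 1 := by rw [hcleared, div_self (pow_ne_zero 4 hd)]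

end CharTwo

theorem stmt9 {F : Type*} [Field F] [Fintype F]
    (hcard : Fintype.card F = 8) :
    ∀ x : F, (1 + x + x⁻¹)⁻¹ + ((1 + x + x⁻¹)⁻¹) ^ 2 + ((1 + x + x⁻¹)⁻¹) ^ 4 = 1 := by
  have := FiniteField.charP_two_of_card_eq_eight hcard
  intro x
  rcases eq_or_ne x 0 with rfl | hx0
  · norm_num
    linear_combination (CharTwo.two_eq_zero : (2 : F) = 0)
  have hx : x ^ 8 = x := hcard ▸ FiniteField.pow_card x
  rw [inv_one_add_add_inv hx0]
  exact CharTwo.trace_div_sq_add_self_add_one hx hx0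
end

section
/- Let n > 1 be even and let ω ∈ F_{2^n} be a primitive third root of unity. Let S ⊆ F_{2^n} satisfy: 0 ∈ S iff 1 ∈ S; x ∈ S \ {0,1} ⇒ x/(1+x) ∈ S. Then 0 ∈ S iff 1 ∈ S, ω ∈ S iff ω² ∈ S, and defining f(x) = x^{-1} + δ_S(x), the four elements 0, 1, ω, ω² are all solutions of f(x + 1) + f(x) = f(1) + f(0); in particular the equation f(x+1)+f(x) = 1 + δ_S(1) + δ_S(0) has at least 4 solutions. -/
open scoped Classical

theorem stmt14 {F : Type*} [Field F] [Fintype F] {n : ℕ}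
    (hn : 1 < n) (hne : Even n) (hcard : Fintype.card F = 2 ^ n)
    (ω : F) (hω : ω ^ 2 + ω + 1 = 0) (S : Set F)
    (h01 : (0 : F) ∈ S ↔ (1 : F) ∈ S)
    (hclosed : ∀ x ∈ S, x ≠ 0 → x ≠ 1 → x / (1 + x) ∈ S)
    (f : F → F)
    (hf : ∀ x, f x = x⁻¹ + (if x ∈ S then (1 : F) else 0)) :
    ((0 : F) ∈ S ↔ (1 : F) ∈ S) ∧ (ω ∈ S ↔ ω ^ 2 ∈ S) ∧
      (∀ x ∈ ({0, 1, ω, ω ^ 2} : Set F), f (x + 1) + f x = f 1 + f 0) ∧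
      4 ≤ Set.ncard {x : F |
        f (x + 1) + f x =
          1 + (if (1 : F) ∈ S then (1 : F) else 0) +
            (if (0 : F) ∈ S then (1 : F) else 0)} := by
  -- characteristic 2
  have h2 : (2 : F) = 0 := by
    have := FiniteField.cast_card_eq_zero F
    rw [hcard] at this
    push_cast at this
    exact pow_eq_zero_iff (by omega : n ≠ 0) |>.mp this
  have hω0 : ω ≠ 0 := by rintro rfl; simp at hω
  have hsq : ω ^ 2 = ω + 1 := by linear_combination hω - (ω + 1) * h2
  have hω1 : ω ≠ 1 := by
    rintro rfl
    rw [one_pow] at hω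
    exact one_ne_zero (α := F) (by linear_combination hω - h2)
  have hsq0 : ω ^ 2 ≠ 0 := pow_ne_zero 2 hω0
  have hsq1 : ω ^ 2 ≠ 1 := by
    rw [hsq]; intro h
    exact hω0 (by linear_combination h)
  have hωne : ω ≠ ω ^ 2 := by
    rw [hsq]; intro h
    exact one_ne_zero (α := F) (by linear_combination -h)
  have hcube : ω * ω ^ 2 = 1 := by linear_combination (ω - 1) * hω
  have hinv : ω⁻¹ = ω ^ 2 := inv_eq_of_mul_eq_one_right hcube
  have hinvsq : (ω ^ 2)⁻¹ = ω := inv_eq_of_mul_eq_one_right (by linear_combination hcube)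
  have e1 : (1 : F) + ω = ω ^ 2 := by linear_combination -hsq
  have e2 : (1 : F) + ω ^ 2 = ω := by linear_combination hsq + h2
  have hdiv1 : ω / (1 + ω) = ω ^ 2 := by
    rw [e1, div_eq_mul_inv, hinvsq]; ring
  have hdiv2 : ω ^ 2 / (1 + ω ^ 2) = ω := by
    rw [e2, div_eq_mul_inv, hinv]
    linear_combination (ω ^ 2 - ω) * hω
  have hiff : ω ∈ S ↔ ω ^ 2 ∈ S := by
    constructor
    · intro h; have := hclosed ω h hω0 hω1; rwa [hdiv1] at this
    · intro h; have := hclosed (ω ^ 2) h hsq0 hsq1; rwa [hdiv2] at this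
  have d2 : (if ω ^ 2 ∈ S then (1 : F) else 0) = if ω ∈ S then 1 else 0 := by
    simp [hiff]
  have d1 : (if (1 : F) ∈ S then (1 : F) else 0) = if (0 : F) ∈ S then 1 else 0 := by
    simp [h01]
  have e1' : ω + 1 = ω ^ 2 := by linear_combination -hsq
  have e2' : ω ^ 2 + 1 = ω := by linear_combination hsq + h2
  have hmain : ∀ x ∈ ({0, 1, ω, ω ^ 2} : Set F), f (x + 1) + f x = f 1 + f 0 := by
    rintro x (rfl | rfl | rfl | rfl)
    · rw [zero_add, add_comm]
    · rw [show (1 : F) + 1 = 0 by linear_combination h2, add_comm]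
    · simp only [hf, e1', hinv, hinvsq, inv_one, inv_zero, d1, d2]
      split_ifs <;>
        first
          | linear_combination hω - h2 | linear_combination h2 | linear_combination -h2
          | linear_combination hω | linear_combination hω - 2 * h2
    · simp only [hf, e2', hinv, hinvsq, inv_one, inv_zero, d1, d2]
      split_ifs <;>
        first
          | linear_combination hω - h2 | linear_combination h2 | linear_combination -h2
          | linear_combination hω | linear_combination hω - 2 * h2
  refine ⟨h01, hiff, hmain, ?_⟩
  have hval : f 1 + f 0 =
      1 + (if (1 : F) ∈ S then (1 : F) else 0) + (if (0 : F) ∈ S then (1 : F) else 0) := by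
    rw [hf, hf, inv_one, inv_zero]; ring
  have hsub : ({0, 1, ω, ω ^ 2} : Set F) ⊆ {x : F |
      f (x + 1) + f x =
        1 + (if (1 : F) ∈ S then (1 : F) else 0) +
          (if (0 : F) ∈ S then (1 : F) else 0)} := by
    intro x hx
    simp only [Set.mem_setOf_eq, ← hval]
    exact hmain x hx
  have h4 : ({0, 1, ω, ω ^ 2} : Set F).ncard = 4 := by
    rw [Set.ncard_insert_of_notMem (by
        simp only [Set.mem_insert_iff, Set.mem_singleton_iff]; push_neg
        exact ⟨zero_ne_one, Ne.symm hω0, Ne.symm hsq0⟩),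
      Set.ncard_insert_of_notMem (by
        simp only [Set.mem_insert_iff, Set.mem_singleton_iff]; push_neg
        exact ⟨Ne.symm hω1, Ne.symm hsq1⟩),
      Set.ncard_pair hωne]
  rw [← h4]
  exact Set.ncard_le_ncard hsub (Set.toFinite _)
end

section
/- Let n be a multiple of 6 with n/6 odd, let ω ∈ F_4 ⊆ F_{2^n} be a primitive third root of unity, and let a ∈ F_{2^n} be such that ω·a ∈ F_8 \ {0} and 1 + a ≠ 0. Then Tr(1/(1+a)) = Tr^3_1(1/(1 + ωa + (ωa)^{-1})) = 1, where Tr is the absolute trace of F_{2^n} and Tr^3_1 the absolute trace of F_8; consequently x² + a·x + a²/(1+a) has no root in F_{2^n}. -/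
lemma aux2_stmt16 {F : Type*} [Field F] (h2 : (2:F) = 0) (c : F) (hc7 : c ^ 7 = 1) :
    (1 + c + c⁻¹) ≠ 0 ∧
      ((1 + c + c⁻¹)⁻¹ + ((1 + c + c⁻¹)⁻¹) ^ 2 + ((1 + c + c⁻¹)⁻¹) ^ 4 = 1) := by
  have hc0 : c ≠ 0 := by
    intro h; rw [h] at hc7; simp at hc7
  have hd : c * c⁻¹ = 1 := mul_inv_cancel₀ hc0
  obtain ⟨t, ht⟩ : ∃ t : F, t = 1 + c + c⁻¹ := ⟨_, rfl⟩
  rw [← ht]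
  have key : c ^ 4 * ((1 + t) * (t ^ 3 + t + 1)) = 0 := by
    rw [ht]
    linear_combination (c+5)*hc7 +
      (3+3*c+7*c^2+13*c^3+16*c^4+13*c^5+7*c^6)*h2 +
      (1 + 5*c + c*c⁻¹ + 14*c^2 + 5*c^2*c⁻¹ + c^2*c⁻¹^2 + 26*c^3 + 14*c^3*c⁻¹
        + 5*c^3*c⁻¹^2 + c^3*c⁻¹^3 + 26*c^4 + 15*c^4*c⁻¹ + 4*c^4*c⁻¹^2 + 15*c^5
        + 6*c^5*c⁻¹ + 4*c^6)*hd
  have hrel : (1 + t) * (t ^ 3 + t + 1) = 0 := by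
    rcases mul_eq_zero.mp key with h | h
    · exact absurd h (pow_ne_zero 4 hc0)
    · exact h
  have ht0 : t ≠ 0 := by
    intro h
    rw [h] at hrel
    norm_num at hrel
  refine ⟨ht0, ?_⟩
  have ht4 : t ^ 4 = t ^ 3 + t ^ 2 + 1 := by
    linear_combination hrel - (t^3+t^2+t+1)*h2
  field_simp
  linear_combination (-1) * ht4

theorem stmt16 {F : Type*} [Field F] [Fintype F] {n : ℕ}
    (h6 : 6 ∣ n) (hodd : Odd (n / 6)) (hcard : Fintype.card F = 2 ^ n)
    (ω : F) (hω : ω ^ 2 + ω + 1 = 0) (a : F)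
    (hmem : (ω * a) ^ 8 = ω * a) (hne0 : ω * a ≠ 0) (ha1 : 1 + a ≠ 0) :
    (∑ i ∈ Finset.range n, ((1 + a)⁻¹) ^ 2 ^ i) = 1 ∧
      ((1 + ω * a + (ω * a)⁻¹)⁻¹ + ((1 + ω * a + (ω * a)⁻¹)⁻¹) ^ 2 +
        ((1 + ω * a + (ω * a)⁻¹)⁻¹) ^ 4) = 1 ∧
      ∀ x : F, x ^ 2 + a * x + a ^ 2 / (1 + a) ≠ 0 := by
  obtain ⟨m, rfl⟩ := h6
  have hm : Odd m := by
    have : 6 * m / 6 = m := by omega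
    rwa [this] at hodd
  have hm0 : m ≠ 0 := by rintro rfl; simp at hm
  have hn0 : 6 * m ≠ 0 := by omega
  -- characteristic 2
  have h2 : (2:F) = 0 := by
    have h := FiniteField.cast_card_eq_zero F
    rw [hcard] at h
    push_cast at h
    exact pow_eq_zero_iff hn0 |>.mp h
  have hchar : CharP F 2 := by
    have hdvd : ringChar F ∣ 2 := ringChar.dvd (by exact_mod_cast h2)
    have h1 : ringChar F ≠ 1 := CharP.ringChar_ne_one
    rcases (Nat.prime_two.eq_one_or_self_of_dvd _ hdvd) with h | h
    · exact absurd h h1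
    · exact ringChar.of_eq h
  haveI := hchar
  haveI : Fact (Nat.Prime 2) := ⟨Nat.prime_two⟩
  have hω0 : ω ≠ 0 := by
    intro h; rw [h] at hω; norm_num at hω
  have ha0 : a ≠ 0 := by
    intro h; exact hne0 (by rw [h, mul_zero])
  have hω3 : ω ^ 3 = 1 := by linear_combination (ω - 1) * hω
  have hc7 : (ω * a) ^ 7 = 1 := by
    have : (ω*a) * ((ω*a)^7 - 1) = 0 := by linear_combination hmem
    rcases mul_eq_zero.mp this with h | h
    · exact absurd h hne0
    · linear_combination h
  -- part 2
  obtain ⟨ht0, hpart2⟩ := aux2_stmt16 h2 (ω * a) hc7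
  -- basic algebra facts
  have ha8 : a ^ 8 = ω ^ 2 * a := by
    linear_combination ω * hmem - (ω^6 + ω^3 + 1) * a^8 * hω3
  have h8 : (1 + a) ^ 8 = 1 + ω ^ 2 * a := by
    have h := add_pow_char_pow (R := F) (p := 2) (n := 3) 1 a
    norm_num at h
    rw [h, ha8]
  have h1a8 : (1 : F) + ω ^ 2 * a ≠ 0 := by
    rw [← h8]; exact pow_ne_zero 8 ha1
  have ha64 : a ^ 64 = a := by
    have h1 : (ω * a) ^ 64 = ω * a := by
      rw [show (64:ℕ) = 8 * 8 from rfl, pow_mul, hmem, hmem]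
    rw [mul_pow] at h1
    have hω64 : ω ^ 64 = ω := by
      calc ω ^ 64 = (ω ^ 3) ^ 21 * ω := by ring
      _ = ω := by rw [hω3]; ring
    rw [hω64] at h1
    exact mul_left_cancel₀ hω0 h1
  have h64 : (1 + a) ^ 64 = 1 + a := by
    have h := add_pow_char_pow (R := F) (p := 2) (n := 6) 1 a
    norm_num at h
    rw [h, ha64]
  have hb64 : ((1 + a)⁻¹) ^ 64 = (1 + a)⁻¹ := by rw [inv_pow, h64]
  have hb8 : ((1 + a)⁻¹) ^ 8 = (1 + ω ^ 2 * a)⁻¹ := by rw [inv_pow, h8]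
  -- the key inverse identity
  have hu : (1 + a)⁻¹ + (1 + ω ^ 2 * a)⁻¹ = (1 + ω * a + (ω * a)⁻¹)⁻¹ := by
    have hωa : ω * a ≠ 0 := hne0
    have hD : (1 + ω * a) * (ω * a) + 1 ≠ 0 := by
      have h := mul_ne_zero hne0 ht0
      have e : (ω * a) * (1 + ω * a + (ω * a)⁻¹) = (1 + ω * a) * (ω * a) + 1 := by
        field_simp
      rwa [e] at h
    apply eq_inv_of_mul_eq_one_left
    field_simp
    have h1a8' : (1 : F) + a * ω ^ 2 ≠ 0 := by rwa [mul_comm]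
    rw [add_div' _ _ _ h1a8', div_mul_eq_mul_div, div_eq_iff h1a8']
    linear_combination (a + a^3*ω^2) * hω + (1 + a^2*ω^2 - a^3*ω^3) * h2
  -- part 1
  have hpart1 : (∑ i ∈ Finset.range (6 * m), ((1 + a)⁻¹) ^ 2 ^ i) = 1 := by
    have hper : ∀ i : ℕ, ((1 + a)⁻¹) ^ 2 ^ (i + 6) = ((1 + a)⁻¹) ^ 2 ^ i := by
      intro i
      rw [show (2:ℕ) ^ (i + 6) = 2 ^ i * 64 from by rw [pow_add]; norm_num,
        mul_comm, pow_mul, hb64]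
    have hshift : ∀ k i : ℕ, ((1 + a)⁻¹) ^ 2 ^ (6 * k + i) = ((1 + a)⁻¹) ^ 2 ^ i := by
      intro k
      induction k with
      | zero => intro i; norm_num
      | succ k ih =>
        intro i
        rw [show 6 * (k + 1) + i = 6 * k + (i + 6) from by ring, ih (i + 6), hper i]
    have hsum6 : ∀ k : ℕ, (∑ i ∈ Finset.range (6 * k), ((1 + a)⁻¹) ^ 2 ^ i)
        = (k : F) * ∑ i ∈ Finset.range 6, ((1 + a)⁻¹) ^ 2 ^ i := by
      intro k
      induction k with
      | zero => simp
      | succ k ih =>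
        rw [show 6 * (k + 1) = 6 * k + 6 from by ring, Finset.sum_range_add, ih,
          Finset.sum_congr rfl (fun i _ => hshift k i)]
        push_cast
        ring
    rw [hsum6 m]
    have hmF : (m : F) = 1 := by
      obtain ⟨k, hk⟩ := hm
      rw [hk]
      push_cast
      linear_combination (k : F) * h2
    rw [hmF, one_mul]
    rw [show (6:ℕ) = 5 + 1 from rfl, Finset.sum_range_succ, Finset.sum_range_succ,
      Finset.sum_range_succ, Finset.sum_range_succ, Finset.sum_range_succ,
      Finset.sum_range_succ, Finset.sum_range_zero]
    simp only [show (2:ℕ)^0=1 from rfl, show (2:ℕ)^1=2 from rfl, show (2:ℕ)^2=4 from rfl,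
      show (2:ℕ)^3=8 from rfl, show (2:ℕ)^4=16 from rfl, show (2:ℕ)^5=32 from rfl,
      pow_one, zero_add]
    have e16 : ((1 + a)⁻¹) ^ 16 = ((1 + ω ^ 2 * a)⁻¹) ^ 2 := by
      rw [show (16:ℕ) = 8 * 2 from rfl, pow_mul, hb8]
    have e32 : ((1 + a)⁻¹) ^ 32 = ((1 + ω ^ 2 * a)⁻¹) ^ 4 := by
      rw [show (32:ℕ) = 8 * 4 from rfl, pow_mul, hb8]
    rw [hb8, e16, e32]
    rw [← hu] at hpart2
    linear_combination hpart2 - ((1 + a)⁻¹ * (1 + ω ^ 2 * a)⁻¹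
      + 2 * ((1 + a)⁻¹)^3 * (1 + ω ^ 2 * a)⁻¹
      + 3 * ((1 + a)⁻¹)^2 * ((1 + ω ^ 2 * a)⁻¹)^2
      + 2 * (1 + a)⁻¹ * ((1 + ω ^ 2 * a)⁻¹)^3) * h2
  refine ⟨hpart1, hpart2, ?_⟩
  -- part 3
  intro x hx
  have hz : (1 + a)⁻¹ = (x * a⁻¹) ^ 2 + x * a⁻¹ := by
    field_simp at hx ⊢
    linear_combination (-1) * hx + a^2 * h2
  set z : F := x * a⁻¹ with hzdef
  have hterm : ∀ i : ℕ, (z ^ 2 + z) ^ 2 ^ i = z ^ 2 ^ (i + 1) + z ^ 2 ^ i := by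
    intro i
    rw [add_pow_char_pow (R := F) (p := 2) (n := i) (z ^ 2) z, ← pow_mul,
      show 2 * 2 ^ i = 2 ^ (i + 1) from (pow_succ' 2 i).symm]
  rw [hz] at hpart1
  have hsplit : (∑ i ∈ Finset.range (6 * m), (z ^ 2 + z) ^ 2 ^ i)
      = (∑ i ∈ Finset.range (6 * m), z ^ 2 ^ (i + 1))
        + ∑ i ∈ Finset.range (6 * m), z ^ 2 ^ i := by
    rw [← Finset.sum_add_distrib]
    exact Finset.sum_congr rfl fun i _ => hterm i
  have hA : (∑ i ∈ Finset.range (6 * m), z ^ 2 ^ (i + 1))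
      = ∑ i ∈ Finset.range (6 * m), z ^ 2 ^ i := by
    have h1 := Finset.sum_range_succ' (fun i => z ^ 2 ^ i) (6 * m)
    have h2' := Finset.sum_range_succ (fun i => z ^ 2 ^ i) (6 * m)
    have hend : z ^ 2 ^ (6 * m) = z := by
      rw [← hcard]; exact FiniteField.pow_card z
    rw [h2', hend] at h1
    have h0 : z ^ 2 ^ (0:ℕ) = z := by norm_num
    rw [h0] at h1
    exact (add_right_cancel h1.symm)
  rw [hsplit, hA] at hpart1
  have : (1 : F) = 0 := by
    rw [← hpart1]
    linear_combination (∑ i ∈ Finset.range (6 * m), z ^ 2 ^ i) * h2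
  exact one_ne_zero this
end

section
/- Let n > 1, q = 2^k with k | n, and t₁ ∈ F_{2^n}* with Tr^n_k(t₁) = 0. Let S = { x ∈ F_{2^n} : x ≠ 0 and x^{-q} = x^{-1} + t₁ }. If q ≡ 1 (mod 3) (equivalently k even), n is even, and ω is a primitive third root of unity in F_{2^n}, then for every a ∈ S, it is impossible that exactly one of ω·a, ω²·a lies in S. (I.e., ω·a ∈ S iff ω²·a ∈ S.) -/
theorem stmt17 {F : Type*} [Field F] [Fintype F] {n k : ℕ}
    (hn : 1 < n) (hne : Even n) (hk : k ∣ n) (hk0 : 0 < k)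
    (hq : 2 ^ k % 3 = 1) (hcard : Fintype.card F = 2 ^ n)
    (t₁ : F) (ht₁ : t₁ ≠ 0)
    (htr : (∑ i ∈ Finset.range (n / k), t₁ ^ 2 ^ (k * i)) = 0)
    (ω : F) (hω : ω ^ 2 + ω + 1 = 0)
    (S : Set F) (hS : S = {x : F | x ≠ 0 ∧ (x⁻¹) ^ 2 ^ k = x⁻¹ + t₁}) :
    ∀ a ∈ S, (ω * a ∈ S ↔ ω ^ 2 * a ∈ S) := by
  intro a ha
  subst hS
  obtain ⟨ha0, haq⟩ := ha
  have h2 : (2 : F) = 0 := by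
    have hc := FiniteField.cast_card_eq_zero F
    rw [hcard] at hc
    push_cast at hc
    exact pow_eq_zero_iff (by omega) |>.mp hc
  have hω0 : ω ≠ 0 := by
    rintro rfl; simp at hω
  have hω1 : ω ≠ 1 := by
    rintro rfl
    have h10 : (1 : F) = 0 := by linear_combination hω - h2
    exact one_ne_zero h10
  have hω3 : ω ^ 3 = 1 := by linear_combination (ω - 1) * hω
  have hωq : ω ^ (2 ^ k) = ω := by
    have h3 : 2 ^ k = 3 * (2 ^ k / 3) + 1 := by omega
    rw [h3, pow_succ, pow_mul, hω3, one_pow, one_mul]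
  have hω2q : (ω ^ 2) ^ (2 ^ k) = ω ^ 2 := by
    rw [← pow_mul, mul_comm, pow_mul, hωq]
  have hω21 : ω ^ 2 ≠ 1 := by
    intro h
    exact hω1 (by linear_combination hω3 - ω * h)
  have key : ∀ c : F, c ≠ 0 → c ^ (2 ^ k) = c → c ≠ 1 →
      c * a ∉ {x : F | x ≠ 0 ∧ (x⁻¹) ^ 2 ^ k = x⁻¹ + t₁} := by
    intro c hc0 hcq hc1 hmem
    obtain ⟨hca0, hca⟩ := hmem
    rw [mul_inv, mul_pow] at hca
    have hcinv : (c⁻¹) ^ 2 ^ k = c⁻¹ := by rw [inv_pow, hcq]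
    rw [hcinv, haq] at hca
    have ht : c⁻¹ * t₁ = t₁ := by linear_combination hca
    have hcinv1 : c⁻¹ = 1 := by
      have := mul_right_cancel₀ ht₁ (show c⁻¹ * t₁ = 1 * t₁ by linear_combination ht)
      exact this
    exact hc1 (inv_eq_one.mp hcinv1)
  exact iff_of_false (key ω hω0 hωq hω1) (key (ω ^ 2) (pow_ne_zero _ hω0) hω2q hω21)
end
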